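/- (Lemma 1 of the paper) Let 𝒫 ⊆ [-π, π] be measurable with measure μ(𝒫), and let ℱ = {f_1, ..., f_N} be a set of N unit-norm vectors in ℂ^M. Define χ(ℱ) = min_{ψ ∈ 𝒫} max_{1 ≤ i ≤ N} |f_i* a(ψ)|², where a(ψ) = (1, e^{iψ}, ..., e^{i(M-1)ψ})^T. Then χ(ℱ) ≤ min( 2πN / μ(𝒫), M ). -/

import Mathlib

open Real Complex Finset MeasureTheory
open scoped ComplexConjugate

/-!
On each angle ψ ∈ 𝒫 some codeword attains the best gain, so if every ψ ∈ 𝒫 is covered with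
gain at least s, the superlevel sets {s ≤ |f_i* a(ψ)|²} cover 𝒫. By Markov's inequality each of
them has measure at most (∫_{-π}^{π} |f_i* a(ψ)|² dψ) / s, and by Parseval (orthogonality of
the exponentials e^{imψ} on [-π, π]) that integral is 2π‖f_i‖² = 2π; hence s μ(𝒫) ≤ 2πN.
The bound M is Cauchy–Schwarz, since every entry of a(ψ) has modulus one.
-/

theorem integral_exp_I_int_mul_eq_ite (n : ℤ) :
    ∫ ψ in -π..π, exp (I * n * ψ) = if n = 0 then (2 * π : ℂ) else 0 := by
  split_ifs with hn
  · simp [hn, two_mul]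
  · have hc : I * n ≠ 0 := mul_ne_zero I_ne_zero (Int.cast_ne_zero.2 hn)
    have hperiod : exp (I * n * π) = exp (I * n * (-π : ℝ)) := by
      rw [← mul_one (exp (I * n * (-π : ℝ))), ← exp_int_mul_two_pi_mul_I n, ← Complex.exp_add]
      congr 1
      push_cast
      ring
    rw [integral_exp_mul_complex hc, hperiod, sub_self, zero_div]

theorem exp_I_int_mul_mul_conj (a b : ℤ) (ψ : ℝ) :
    exp (I * a * ψ) * conj (exp (I * b * ψ)) = exp (I * (a - b : ℤ) * ψ) := by
  rw [← Complex.exp_conj, ← Complex.exp_add]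
  congr 1
  simp only [map_mul, conj_I, map_intCast, conj_ofReal]
  push_cast
  ring

theorem integral_norm_sum_mul_exp_sq {ι : Type*} [Fintype ι] {n : ι → ℤ}
    (hn : Function.Injective n) (c : ι → ℂ) :
    ∫ ψ in -π..π, ‖∑ i, c i * exp (I * n i * ψ)‖ ^ 2 = 2 * π * ∑ i, ‖c i‖ ^ 2 := by
  classical
  apply ofReal_injective
  have hint : ∀ i j, IntervalIntegrable (fun ψ : ℝ => c i * conj (c j) *
      exp (I * (n i - n j : ℤ) * ψ)) volume (-π) π := fun i j =>
    (by fun_prop : Continuous _).intervalIntegrable _ _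
  calc ((∫ ψ in -π..π, ‖∑ i, c i * exp (I * n i * ψ)‖ ^ 2 : ℝ) : ℂ)
      = ∫ ψ in -π..π, ∑ i, ∑ j, c i * conj (c j) * exp (I * (n i - n j : ℤ) * ψ) := by
        rw [← intervalIntegral.integral_ofReal]
        refine intervalIntegral.integral_congr fun ψ _ => ?_
        simp only [ofReal_pow, ← mul_conj', map_sum, sum_mul_sum, map_mul]
        refine sum_congr rfl fun i _ => sum_congr rfl fun j _ => ?_
        rw [← exp_I_int_mul_mul_conj]
        ring
    _ = ∑ i, ∑ j, c i * conj (c j) * ∫ ψ in -π..π, exp (I * (n i - n j : ℤ) * ψ) := by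
        rw [intervalIntegral.integral_finsetSum fun i _ =>
          (continuous_finsetSum _ fun j _ => by fun_prop).intervalIntegrable _ _]
        refine sum_congr rfl fun i _ => ?_
        rw [intervalIntegral.integral_finsetSum fun j _ => hint i j]
        exact sum_congr rfl fun j _ => intervalIntegral.integral_const_mul _ _
    _ = ((2 * π * ∑ i, ‖c i‖ ^ 2 : ℝ) : ℂ) := by
        simp only [integral_exp_I_int_mul_eq_ite, sub_eq_zero, hn.eq_iff, mul_ite, mul_zero,
          sum_ite_eq, mem_univ, if_true, mul_conj']
        push_cast
        rw [mul_sum]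
        exact sum_congr rfl fun i _ => mul_comm _ _

theorem norm_sum_mul_sq_le_card_mul {ι R : Type*} [Fintype ι] [SeminormedRing R]
    (c z : ι → R) (hz : ∀ i, ‖z i‖ ≤ 1) :
    ‖∑ i, c i * z i‖ ^ 2 ≤ Fintype.card ι * ∑ i, ‖c i‖ ^ 2 := by
  have hnorm : ‖∑ i, c i * z i‖ ≤ ∑ i, ‖c i‖ :=
    (norm_sum_le _ _).trans <| sum_le_sum fun i _ =>
      (norm_mul_le _ _).trans (mul_le_of_le_one_right (norm_nonneg _) (hz i))
  calc ‖∑ i, c i * z i‖ ^ 2 ≤ (∑ i, ‖c i‖) ^ 2 := by gcongr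
    _ ≤ Fintype.card ι * ∑ i, ‖c i‖ ^ 2 := sq_sum_le_card_mul_sum_sq

theorem mul_measureReal_le_sum_integral_of_le_iSup {α ι : Type*} [MeasurableSpace α] [Fintype ι]
    {μ : Measure α} [IsFiniteMeasure μ] {g : ι → α → ℝ} {P : Set α} {s : ℝ}
    (hg : ∀ i, 0 ≤ g i) (hgi : ∀ i, Integrable (g i) μ) (hs : ∀ x ∈ P, s ≤ ⨆ i, g i x) :
    s * μ.real P ≤ ∑ i, ∫ x, g i x ∂μ := by
  rcases le_or_gt s 0 with hs0 | hs0
  · exact (mul_nonpos_of_nonpos_of_nonneg hs0 measureReal_nonneg).trans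
      (sum_nonneg fun i _ => integral_nonneg (hg i))
  have hcover : P ⊆ ⋃ i, {x | s ≤ g i x} := by
    intro x hx
    have : Nonempty ι := by
      by_contra h
      have := not_nonempty_iff.1 h
      linarith [hs x hx, Real.iSup_of_isEmpty fun i => g i x]
    obtain ⟨i, hi⟩ := exists_eq_ciSup_of_finite (f := fun i => g i x)
    exact Set.mem_iUnion.2 ⟨i, (hs x hx).trans hi.ge⟩
  calc s * μ.real P ≤ s * ∑ i, μ.real {x | s ≤ g i x} := by
        gcongr
        exact (measureReal_mono hcover).trans (measureReal_iUnion_fintype_le _)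
    _ = ∑ i, s * μ.real {x | s ≤ g i x} := mul_sum _ _ _
    _ ≤ ∑ i, ∫ x, g i x ∂μ := sum_le_sum fun i _ =>
        mul_meas_ge_le_integral_of_nonneg (Filter.Eventually.of_forall (hg i)) (hgi i) s

theorem covering_metric_bound_general (M N : ℕ)
    (F : Fin N → (Fin M → ℂ))
    (hF : ∀ i, ∑ m : Fin M, ‖F i m‖ ^ 2 = 1)
    (P : Set ℝ) (hPsub : P ⊆ Set.Icc (-π) π)
    (hPpos : 0 < volume P) :
    sInf ((fun ψ : ℝ => ⨆ i : Fin N, ‖∑ m : Fin M,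
        (starRingEnd ℂ) (F i m) * Complex.exp (Complex.I * (m : ℕ) * (ψ : ℂ))‖ ^ 2) '' P)
      ≤ min (2 * π * N / (volume P).toReal) M := by
  set gain : Fin N → ℝ → ℝ := fun i ψ => ‖∑ m : Fin M,
    conj (F i m) * exp (I * (m : ℕ) * (ψ : ℂ))‖ ^ 2
  have hgain_nonneg : ∀ i, 0 ≤ gain i := fun i ψ => sq_nonneg _
  have hbdd : BddBelow ((fun ψ => ⨆ i, gain i ψ) '' P) :=
    ⟨0, by rintro _ ⟨ψ, -, rfl⟩; exact Real.iSup_nonneg fun i => hgain_nonneg i ψ⟩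
  have hgain_integral : ∀ i, ∫ ψ in Set.Icc (-π) π, gain i ψ = 2 * π := fun i => by
    have := integral_norm_sum_mul_exp_sq (n := fun m : Fin M => ((m : ℕ) : ℤ))
      (Nat.cast_injective.comp Fin.val_injective) (fun m => conj (F i m))
    rw [integral_Icc_eq_integral_Ioc, ← intervalIntegral.integral_of_le (by linarith [pi_pos])]
    simpa [gain, hF i] using this
  obtain ⟨ψ₀, hψ₀⟩ := nonempty_of_measure_ne_zero hPpos.ne'
  refine le_min ?_ ?_
  · have hPfin : volume P ≠ ⊤ := measure_ne_top_of_subset hPsub measure_Icc_lt_top.ne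
    rw [le_div_iff₀ (ENNReal.toReal_pos hPpos.ne' hPfin)]
    calc sInf _ * (volume P).toReal = sInf _ * (volume.restrict (Set.Icc (-π) π)).real P := by
          rw [measureReal_def, Measure.restrict_eq_self _ hPsub]
      _ ≤ ∑ i, ∫ ψ in Set.Icc (-π) π, gain i ψ :=
          mul_measureReal_le_sum_integral_of_le_iSup hgain_nonneg
            (fun i => (by fun_prop : Continuous (gain i)).integrableOn_Icc)
            fun ψ hψ => csInf_le hbdd ⟨ψ, hψ, rfl⟩
      _ = 2 * π * N := by simp [hgain_integral, mul_comm]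
  · refine (csInf_le hbdd ⟨ψ₀, hψ₀, rfl⟩).trans (Real.iSup_le (fun i => ?_) M.cast_nonneg)
    simpa [hF i] using norm_sum_mul_sq_le_card_mul (fun m => conj (F i m))
      (fun m : Fin M => exp (I * (m : ℕ) * (ψ₀ : ℂ))) fun m => by simp [norm_exp]

/-- Lemma 1: the covering-distance inner product of a size-`N` codebook of unit-norm
beamformers over an angle set `P` is at most `min (2πN/μ(P)) M`. -/
theorem covering_metric_bound (M N : ℕ) (hN : 0 < N)
    (F : Fin N → (Fin M → ℂ))
    (hF : ∀ i, ∑ m : Fin M, ‖F i m‖ ^ 2 = 1)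
    (P : Set ℝ) (hPsub : P ⊆ Set.Icc (-π) π) (hPm : MeasurableSet P)
    (hPpos : 0 < volume P) :
    sInf ((fun ψ : ℝ => ⨆ i : Fin N, ‖∑ m : Fin M,
        (starRingEnd ℂ) (F i m) * Complex.exp (Complex.I * (m : ℕ) * (ψ : ℂ))‖ ^ 2) '' P)
      ≤ min (2 * π * N / (volume P).toReal) M :=
  covering_metric_bound_general M N F hF P hPsub hPpos
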